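/- arXiv:2101.10890 — 3 statements merged into one kernel-verified Lean document; each statement's English description precedes it below -/
import Mathlib

section
/- Let A → BC be a rule of an SLP 𝒮, let w_A = deriv(A) = deriv(B)·deriv(C), let M be an NFA accepting non-tail-spanning marked words, and let i, j be states. Then a partial marker set Λ_A belongs to T_A[i, j] (i.e., Λ_A is compatible with w_A, ins(w_A, Λ_A) is non-tail-spanning, and M goes from i to j reading ins(w_A, Λ_A)) if and only if there exist a state k and partial marker sets Λ_B ∈ T_B[i, k] and Λ_C ∈ T_C[k, j] such that Λ_A = Λ_B ∪ (Λ_C + |deriv(B)|), where Λ + s denotes the s-rightshift. -/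
/-- A non-tail-spanning marked word `A₁ b₁ A₂ b₂ … Aₙ bₙ` (the trailing set symbol
`A_{n+1}` is empty and omitted). -/
abbrev MWord (Γ Alph : Type*) := List (Finset Γ × Alph)

/-- The `s`-rightshift of a partial marker set. -/
def rshift {Γ : Type*} [DecidableEq Γ] (Λ : Finset (Γ × ℕ)) (s : ℕ) : Finset (Γ × ℕ) :=
  Λ.image (fun p => (p.1, p.2 + s))

/-- Insert the markers of `Λ` into the document `d` (positions `> |d|` are not placed;
for non-tail-spanning `Λ` no marker is lost). -/
def ins {Γ Alph : Type*} [DecidableEq Γ] (d : List Alph) (Λ : Finset (Γ × ℕ)) :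
    MWord Γ Alph :=
  (d.zipIdx.map Prod.swap).map (fun ib => ((Λ.filter (fun p => p.2 = ib.1 + 1)).image Prod.fst, ib.2))

/-- Erase all set symbols. -/
def getWord {Γ Alph : Type*} (w : MWord Γ Alph) : List Alph := w.map Prod.snd

/-- The partial marker set `{(σ, i) : σ ∈ Aᵢ}` encoded by a marked word. -/
def mkd {Γ Alph : Type*} [DecidableEq Γ] (w : MWord Γ Alph) : Finset (Γ × ℕ) :=
  ((w.zipIdx.map Prod.swap).map (fun ib => ib.2.1.image (fun σ => (σ, ib.1 + 1)))).foldr (· ∪ ·) ∅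

/-- Serialize a marked word into the sequence of symbols (over `𝒫(Γ_𝒳) ∪ Σ`) read
by an automaton: `A₁, b₁, A₂, b₂, …, Aₙ, bₙ`. -/
def ser {Γ Alph : Type*} (w : MWord Γ Alph) : List (Finset Γ ⊕ Alph) :=
  w.flatMap (fun Ab => [Sum.inl Ab.1, Sum.inr Ab.2])

/-- NFA transition function extended to words. -/
def dstar {Q A : Type*} (δ : Q → A → Set Q) : List A → Q → Set Q
  | [], p => {p}
  | a :: w, p => ⋃ q ∈ δ p a, dstar δ w q

/-- `T_X[i, j]` for the word `w = deriv(X)`. -/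
def Tset {Γ Alph Q : Type*} [DecidableEq Γ] (δ : Q → (Finset Γ ⊕ Alph) → Set Q)
    (w : List Alph) (i j : Q) : Set (Finset (Γ × ℕ)) :=
  {Λ | (∀ p ∈ Λ, 1 ≤ p.2 ∧ p.2 ≤ w.length + 1) ∧ (∀ p ∈ Λ, p.2 ≠ w.length + 1) ∧
    j ∈ dstar δ (ser (ins w Λ)) i}

/-! A marker set over `wB ++ wC` splits into the markers at positions `≤ |wB|` and
a shifted marker set over `wC`; inserting the two parts separately and concatenating gives the
same marked word, and a run of `M` on a concatenation passes through an intermediate state. -/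

lemma mem_dstar_append {Q A : Type*} (δ : Q → A → Set Q) (u v : List A) (i j : Q) :
    j ∈ dstar δ (u ++ v) i ↔ ∃ k, k ∈ dstar δ u i ∧ j ∈ dstar δ v k := by
  induction u generalizing i with
  | nil => simp [dstar]
  | cons a u ih =>
    simp only [List.cons_append, dstar, Set.mem_iUnion, ih]
    tauto

lemma ser_append {Γ Alph : Type*} (u v : MWord Γ Alph) : ser (u ++ v) = ser u ++ ser v :=
  List.flatMap_append

section MarkerSets

variable {Γ : Type*} [DecidableEq Γ]

lemma mem_rshift {Λ : Finset (Γ × ℕ)} {s : ℕ} {p : Γ × ℕ} :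
    p ∈ rshift Λ s ↔ s ≤ p.2 ∧ (p.1, p.2 - s) ∈ Λ := by
  obtain ⟨a, n⟩ := p
  simp only [rshift, Finset.mem_image, Prod.mk.injEq, Prod.exists]
  constructor
  · rintro ⟨b, m, hm, rfl, rfl⟩
    simpa using hm
  · rintro ⟨hsn, hm⟩
    exact ⟨a, n - s, hm, rfl, by omega⟩

lemma filter_rshift (Λ : Finset (Γ × ℕ)) (s n : ℕ) :
    (rshift Λ s).filter (fun p => p.2 = n + s) = rshift (Λ.filter (fun p => p.2 = n)) s := by
  ext ⟨a, m⟩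
  simp only [Finset.mem_filter, mem_rshift]
  constructor
  · rintro ⟨⟨-, hm⟩, rfl⟩
    simpa using hm
  · rintro ⟨hsm, hm, hmn⟩
    exact ⟨⟨hsm, hm⟩, by omega⟩

lemma union_rshift_mem_Icc {ΛB ΛC : Finset (Γ × ℕ)} {s t : ℕ}
    (hB : ∀ p ∈ ΛB, p.2 ∈ Set.Icc 1 s) (hC : ∀ p ∈ ΛC, p.2 ∈ Set.Icc 1 t) :
    ∀ p ∈ ΛB ∪ rshift ΛC s, p.2 ∈ Set.Icc 1 (s + t) := by
  intro p hp
  rcases Finset.mem_union.1 hp with hp | hp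
  · have := hB p hp
    simp only [Set.mem_Icc] at this ⊢
    omega
  · obtain ⟨hsp, hp⟩ := mem_rshift.1 hp
    have := hC _ hp
    simp only [Set.mem_Icc] at this ⊢
    omega

lemma exists_eq_union_rshift {Λ : Finset (Γ × ℕ)} {s t : ℕ}
    (h : ∀ p ∈ Λ, p.2 ∈ Set.Icc 1 (s + t)) :
    ∃ ΛB ΛC : Finset (Γ × ℕ), (∀ p ∈ ΛB, p.2 ∈ Set.Icc 1 s) ∧
      (∀ p ∈ ΛC, p.2 ∈ Set.Icc 1 t) ∧ Λ = ΛB ∪ rshift ΛC s := by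
  refine ⟨Λ.filter (fun p => p.2 ≤ s),
    (Λ.filter (fun p => s < p.2)).image (fun p => (p.1, p.2 - s)), ?_, ?_, ?_⟩
  · intro p hp
    obtain ⟨hp, hps⟩ := Finset.mem_filter.1 hp
    have := h p hp
    simp only [Set.mem_Icc] at this ⊢
    omega
  · intro p hp
    obtain ⟨q, hq, rfl⟩ := Finset.mem_image.1 hp
    obtain ⟨hq, hqs⟩ := Finset.mem_filter.1 hq
    have := h q hq
    simp only [Set.mem_Icc] at this ⊢
    omega
  · ext ⟨a, n⟩
    simp only [Finset.mem_union, Finset.mem_filter, mem_rshift, Finset.mem_image,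
      Prod.mk.injEq, Prod.exists]
    constructor
    · intro hn
      by_cases hns : n ≤ s
      · exact Or.inl ⟨hn, hns⟩
      · exact Or.inr ⟨by omega, a, n, ⟨hn, by omega⟩, rfl, rfl⟩
    · rintro (⟨hn, -⟩ | ⟨hsn, b, m, ⟨hm, hsm⟩, rfl, hmn⟩)
      · exact hn
      · rwa [show n = m by omega]

variable {Alph : Type*}

lemma ins_append (wB wC : List Alph) {ΛB ΛC : Finset (Γ × ℕ)}
    (hB : ∀ p ∈ ΛB, p.2 ≤ wB.length) (hC : ∀ p ∈ ΛC, 1 ≤ p.2) :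
    ins (wB ++ wC) (ΛB ∪ rshift ΛC wB.length) = ins wB ΛB ++ ins wC ΛC := by
  unfold ins
  rw [List.zipIdx_append, List.zipIdx_eq_map_add (l := wC)]
  simp only [List.map_append, List.map_map]
  congr 1 <;> apply List.map_congr_left <;> rintro ⟨b, n⟩ hn <;>
    simp only [Function.comp, Prod.swap, Finset.filter_union]
  · have hn : n < wB.length := by simpa using List.snd_lt_of_mem_zipIdx hn
    have hCn : (rshift ΛC wB.length).filter (fun p => p.2 = n + 1) = ∅ :=
      Finset.filter_false_of_mem fun p hp => by have := hC _ (mem_rshift.1 hp).2; omega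
    rw [hCn, Finset.union_empty]
  · have hBn : ΛB.filter (fun p => p.2 = wB.length + n + 1) = ∅ :=
      Finset.filter_false_of_mem fun p hp => by have := hB p hp; omega
    rw [Nat.zero_add, hBn, Finset.empty_union, show wB.length + n + 1 = n + 1 + wB.length by omega,
      filter_rshift, rshift, Finset.image_image]
    rfl

end MarkerSets

lemma mem_Tset_iff {Γ Alph Q : Type*} [DecidableEq Γ] {δ : Q → (Finset Γ ⊕ Alph) → Set Q}
    {w : List Alph} {i j : Q} {Λ : Finset (Γ × ℕ)} :
    Λ ∈ Tset δ w i j ↔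
      (∀ p ∈ Λ, p.2 ∈ Set.Icc 1 w.length) ∧ j ∈ dstar δ (ser (ins w Λ)) i := by
  simp only [Tset, Set.mem_ofPred_eq, Set.mem_Icc, ← and_assoc, ← forall₂_and]
  refine and_congr_left' (forall₂_congr fun p _ => ?_)
  omega

/-- For a rule `A → BC` (so `deriv(A) = deriv(B) ++ deriv(C)`):
`Λ_A ∈ T_A[i, j]` iff there are a state `k` and `Λ_B ∈ T_B[i, k]`,
`Λ_C ∈ T_C[k, j]` with `Λ_A = Λ_B ∪ (Λ_C + |deriv(B)|)`. -/
theorem Tset_append {Γ Alph Q : Type*} [DecidableEq Γ]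
    (δ : Q → (Finset Γ ⊕ Alph) → Set Q) (wB wC : List Alph) (i j : Q)
    (ΛA : Finset (Γ × ℕ)) :
    ΛA ∈ Tset δ (wB ++ wC) i j ↔
      ∃ (k : Q) (ΛB ΛC : Finset (Γ × ℕ)), ΛB ∈ Tset δ wB i k ∧ ΛC ∈ Tset δ wC k j ∧
        ΛA = ΛB ∪ rshift ΛC wB.length := by
  simp only [mem_Tset_iff, List.length_append]
  constructor
  · rintro ⟨hA, hrun⟩
    obtain ⟨ΛB, ΛC, hB, hC, rfl⟩ := exists_eq_union_rshift hA
    rw [ins_append wB wC (fun p hp => (hB p hp).2) (fun p hp => (hC p hp).1), ser_append,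
      mem_dstar_append] at hrun
    obtain ⟨k, hk₁, hk₂⟩ := hrun
    exact ⟨k, ΛB, ΛC, ⟨hB, hk₁⟩, ⟨hC, hk₂⟩, rfl⟩
  · rintro ⟨k, ΛB, ΛC, ⟨hB, hk₁⟩, ⟨hC, hk₂⟩, rfl⟩
    refine ⟨union_rshift_mem_Icc hB hC, ?_⟩
    rw [ins_append wB wC (fun p hp => (hB p hp).2) (fun p hp => (hC p hp).1), ser_append,
      mem_dstar_append]
    exact ⟨k, hk₁, hk₂⟩
end

section
/- Let M be a DFA and let A → BC be a rule of an SLP. For states i, j and distinct states k ≠ k', the sets D_k = {Λ_B ∪ (Λ_C + |deriv(B)|) : Λ_B ∈ T_B[i, k], Λ_C ∈ T_C[k, j]} and D_{k'} = {Λ_B ∪ (Λ_C + |deriv(B)|) : Λ_B ∈ T_B[i, k'], Λ_C ∈ T_C[k', j]} are disjoint. -/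
/-- `T_A[i, j]` for a DFA. -/
def TsetD {Γ Alph Q : Type*} [DecidableEq Γ] (δ : Q → (Finset Γ ⊕ Alph) → Q)
    (w : List Alph) (i j : Q) : Set (Finset (Γ × ℕ)) :=
  {Λ | (∀ p ∈ Λ, 1 ≤ p.2 ∧ p.2 ≤ w.length + 1) ∧ (∀ p ∈ Λ, p.2 ≠ w.length + 1) ∧
    (ser (ins w Λ)).foldl δ i = j}

/-- `D_k = {Λ_B ∪ (Λ_C + |deriv(B)|) : Λ_B ∈ T_B[i, k], Λ_C ∈ T_C[k, j]}` for a
rule `A → BC` with `wB = deriv(B)`, `wC = deriv(C)`. -/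
def Dset {Γ Alph Q : Type*} [DecidableEq Γ] (δ : Q → (Finset Γ ⊕ Alph) → Q)
    (wB wC : List Alph) (i k j : Q) : Set (Finset (Γ × ℕ)) :=
  {Λ | ∃ ΛB ∈ TsetD δ wB i k, ∃ ΛC ∈ TsetD δ wC k j, Λ = ΛB ∪ rshift ΛC wB.length}

/-!
A marker set in `D_k` splits uniquely: its markers at positions `≤ |deriv(B)|` form `Λ_B`, the others
come from the shifted `Λ_C`. So a common element of `D_k` and `D_{k'}` has the same `Λ_B ∈ T_B[i, k]`
and `Λ_B ∈ T_B[i, k']`, and since `M` is deterministic the run of `M` on `ins(deriv(B), Λ_B)` from `i`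
ends in a single state, whence `k = k'`.
-/

section MarkerSets

variable {Γ : Type*} [DecidableEq Γ]

lemma filter_union_rshift_eq {A C : Finset (Γ × ℕ)} {s : ℕ} (hA : ∀ p ∈ A, p.2 ≤ s)
    (hC : ∀ q ∈ C, 1 ≤ q.2) :
    (A ∪ rshift C s).filter (fun p => p.2 ≤ s) = A := by
  rw [Finset.filter_union, Finset.filter_true_of_mem hA, Finset.filter_false_of_mem, Finset.union_empty]
  simp only [rshift, Finset.mem_image]
  rintro _ ⟨q, hq, rfl⟩
  have := hC q hq
  omega

variable {Alph Q : Type*} {δ : Q → (Finset Γ ⊕ Alph) → Q} {w : List Alph} {i j : Q}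
  {Λ : Finset (Γ × ℕ)}

lemma one_le_of_mem_TsetD (hΛ : Λ ∈ TsetD δ w i j) {p : Γ × ℕ} (hp : p ∈ Λ) : 1 ≤ p.2 :=
  (hΛ.1 p hp).1

lemma le_length_of_mem_TsetD (hΛ : Λ ∈ TsetD δ w i j) {p : Γ × ℕ} (hp : p ∈ Λ) :
    p.2 ≤ w.length :=
  Nat.le_of_lt_succ <| lt_of_le_of_ne (hΛ.1 p hp).2 (hΛ.2.1 p hp)

lemma TsetD_target_unique {j' : Q} (hΛ : Λ ∈ TsetD δ w i j) (hΛ' : Λ ∈ TsetD δ w i j') :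
    j = j' :=
  hΛ.2.2.symm.trans hΛ'.2.2

end MarkerSets

/-- For a DFA and a rule `A → BC`, the sets `D_k` and `D_{k'}` are disjoint for
distinct intermediate states `k ≠ k'`. -/
theorem Dset_disjoint {Γ Alph Q : Type*} [DecidableEq Γ]
    (δ : Q → (Finset Γ ⊕ Alph) → Q) (wB wC : List Alph) (i j k k' : Q) (h : k ≠ k') :
    Disjoint (Dset δ wB wC i k j) (Dset δ wB wC i k' j) := by
  rw [Set.disjoint_left]
  rintro Λ ⟨ΛB, hB, ΛC, hC, rfl⟩ ⟨ΛB', hB', ΛC', hC', heq⟩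
  have hsame : ΛB = ΛB' := by
    rw [← filter_union_rshift_eq (fun _ => le_length_of_mem_TsetD hB) (fun _ => one_le_of_mem_TsetD hC),
      heq, filter_union_rshift_eq (fun _ => le_length_of_mem_TsetD hB')
        (fun _ => one_le_of_mem_TsetD hC')]
  exact h (TsetD_target_unique hB (hsame ▸ hB'))
end

section
/- Let T be a rooted binary tree (every internal node has exactly two children) of depth at most h, in which a subset of the leaves is designated as 'terminal' and the following holds: no internal node has two non-terminal leaves as children. If T has at most ℓ terminal leaves with ℓ ≥ 1, then T has at most 2ℓh nodes that are internal or terminal leaves, and at most 4ℓh nodes in total. -/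
/-- Rooted binary trees whose leaves are marked terminal (`leaf true`) or
non-terminal (`leaf false`); every internal node has exactly two children. -/
inductive BTree where
  | leaf : Bool → BTree
  | node : BTree → BTree → BTree

namespace BTree

/-- Depth, counted as the maximal number of nodes on a root-to-leaf path. -/
def depth : BTree → ℕ
  | leaf _ => 1
  | node l r => 1 + max l.depth r.depth

/-- Number of terminal leaves. -/
def termCount : BTree → ℕ
  | leaf b => if b then 1 else 0
  | node l r => l.termCount + r.termCount

/-- Number of nodes that are internal or terminal leaves. -/
def intTermCount : BTree → ℕ
  | leaf b => if b then 1 else 0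
  | node l r => 1 + l.intTermCount + r.intTermCount

/-- Total number of nodes. -/
def size : BTree → ℕ
  | leaf _ => 1
  | node l r => 1 + l.size + r.size

/-- The structural constraint: no internal node has two non-terminal leaves as
children. -/
def ok : BTree → Prop
  | leaf _ => True
  | node l r => ¬(l = leaf false ∧ r = leaf false) ∧ l.ok ∧ r.ok

end BTree

lemma BTree.depth_pos (T : BTree) : 1 ≤ T.depth := by
  cases T <;> simp [BTree.depth]

lemma BTree.size_le (T : BTree) : T.size ≤ 2 * T.intTermCount + 1 := by
  induction T with
  | leaf b => cases b <;> simp [BTree.size, BTree.intTermCount]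
  | node l r ihl ihr => simp only [BTree.size, BTree.intTermCount]; omega

lemma BTree.term_zero (T : BTree) (hok : T.ok) (h0 : T.termCount = 0) :
    T = BTree.leaf false := by
  induction T with
  | leaf b => cases b <;> simp_all [BTree.termCount]
  | node l r ihl ihr =>
    simp only [BTree.termCount] at h0
    obtain ⟨hne, hl, hr⟩ := hok
    exact absurd ⟨ihl hl (by omega), ihr hr (by omega)⟩ hne

lemma BTree.main_ind (T : BTree) (hok : T.ok) (ht : 1 ≤ T.termCount) :
    T.intTermCount + T.depth ≤ 2 * T.termCount * T.depth := by
  induction T with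
  | leaf b =>
    cases b <;> simp_all [BTree.termCount, BTree.intTermCount, BTree.depth]
  | node l r ihl ihr =>
    obtain ⟨hne, hl, hr⟩ := hok
    simp only [BTree.termCount, BTree.intTermCount, BTree.depth] at *
    have hdl := l.depth_pos
    have hdr := r.depth_pos
    rcases Nat.eq_zero_or_pos l.termCount with h0l | hpl
    · have := l.term_zero hl h0l
      subst this
      simp only [BTree.intTermCount, BTree.depth, BTree.termCount] at *
      have h1 := ihr hr (by omega)
      have : max 1 r.depth = r.depth := by omega
      rw [this]
      nlinarith
    rcases Nat.eq_zero_or_pos r.termCount with h0r | hpr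
    · have := r.term_zero hr h0r
      subst this
      simp only [BTree.intTermCount, BTree.depth, BTree.termCount] at *
      have h1 := ihl hl (by omega)
      have : max l.depth 1 = l.depth := by omega
      rw [this]
      nlinarith
    · have h1 := ihl hl hpl
      have h2 := ihr hr hpr
      have hml : l.depth ≤ max l.depth r.depth := le_max_left _ _
      have hmr : r.depth ≤ max l.depth r.depth := le_max_right _ _
      nlinarith [Nat.mul_le_mul_left (2 * l.termCount) hml,
        Nat.mul_le_mul_left (2 * r.termCount) hmr]

/-- If `T` is a binary tree of depth at most `h` in which no internal node has two
non-terminal leaves as children, and `T` has at most `ℓ` terminal leaves with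
`ℓ ≥ 1`, then `T` has at most `2ℓh` nodes that are internal or terminal leaves, and
at most `4ℓh` nodes in total. -/
theorem btree_size_bound (T : BTree) (h ℓ : ℕ)
    (hok : T.ok) (hdepth : T.depth ≤ h)
    (hℓ₁ : 1 ≤ T.termCount) (hℓ : T.termCount ≤ ℓ) :
    T.intTermCount ≤ 2 * ℓ * h ∧ T.size ≤ 4 * ℓ * h := by
  have hmain := T.main_ind hok hℓ₁
  have hdp := T.depth_pos
  have hsz := T.size_le
  have hkey : (T.intTermCount : ℤ) + h ≤ 2 * ℓ * h := by
    have h1 : (T.intTermCount : ℤ) + T.depth ≤ 2 * T.termCount * T.depth := by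
      exact_mod_cast hmain
    have h2 : (T.depth : ℤ) ≤ h := by exact_mod_cast hdepth
    have h3 : (1 : ℤ) ≤ T.termCount := by exact_mod_cast hℓ₁
    have h4 : (T.termCount : ℤ) ≤ ℓ := by exact_mod_cast hℓ
    have h5 : (1 : ℤ) ≤ T.depth := by exact_mod_cast hdp
    nlinarith [mul_nonneg (by linarith : (0:ℤ) ≤ (ℓ : ℤ) - T.termCount)
        (by linarith : (0:ℤ) ≤ (T.depth : ℤ)),
      mul_nonneg (by linarith : (0:ℤ) ≤ 2 * (ℓ : ℤ) - 1)
        (by linarith : (0:ℤ) ≤ (h : ℤ) - T.depth)]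
  have hh1 : (1 : ℤ) ≤ h := by
    have : (1 : ℤ) ≤ T.depth := by exact_mod_cast hdp
    have h2 : (T.depth : ℤ) ≤ h := by exact_mod_cast hdepth
    linarith
  have hszZ : (T.size : ℤ) ≤ 2 * T.intTermCount + 1 := by exact_mod_cast hsz
  constructor
  · have : (T.intTermCount : ℤ) ≤ 2 * ℓ * h := by linarith
    exact_mod_cast this
  · have : (T.size : ℤ) ≤ 4 * ℓ * h := by linarith
    exact_mod_cast this
end
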